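/- Let (h_j) be a normalized valid packing of a finite set J' of jobs inside one round with uniform edge capacity c*. Then for every job j ∈ J' there exist k ≥ 1 and distinct jobs j_1, j_2, …, j_k ∈ J' with j_1 = j such that P_{j_i} ∩ P_{j_{i+1}} ≠ ∅ and h_{j_i} + d_{j_i} = h_{j_{i+1}} for all 1 ≤ i < k, and h_{j_k} + d_{j_k} = c*; consequently h_j = c* − (d_{j_1} + d_{j_2} + ⋯ + d_{j_k}), i.e., every height in a normalized packing equals c* minus a sum of demands of distinct jobs forming a chain starting at j. -/

import Mathlib

open scoped Classical

namespace PathUFP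

variable {ι : Type*}

/-- Job `i` uses the edge `e_{k+1}` (for `k : Fin m`, edges being 1-indexed
`e_1, …, e_m`) iff `s_i < k + 1 ≤ t_i`, i.e. iff `s_i ≤ k < t_i`. -/
def uses (s t : ι → ℕ) {m : ℕ} (i : ι) (k : Fin m) : Prop :=
  s i ≤ (k : ℕ) ∧ (k : ℕ) < t i

/-- The paths of two jobs intersect: they use a common edge. -/
def pathsIntersect (s t : ι → ℕ) (i j : ι) : Prop :=
  ∃ k : ℕ, (s i ≤ k ∧ k < t i) ∧ (s j ≤ k ∧ k < t j)

/-- The open rectangle `(s_i, t_i) × (h_i, h_i + d_i)` of job `i` drawn at height `h i`. -/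
def rect (s t : ι → ℕ) (d h : ι → ℝ) (i : ι) : Set (ℝ × ℝ) :=
  Set.Ioo (s i : ℝ) (t i : ℝ) ×ˢ Set.Ioo (h i) (h i + d i)

/-- `h` is a valid packing of the jobs inside one round with uniform edge capacity
`cstar`: heights are nonnegative, every job fits below the capacity, and the open
rectangles are pairwise disjoint. -/
def ValidPacking (s t : ι → ℕ) (d : ι → ℝ) (cstar : ℝ) (h : ι → ℝ) : Prop :=
  (∀ i, 0 ≤ h i) ∧ (∀ i, h i + d i ≤ cstar) ∧
  (∀ i j, i ≠ j → Disjoint (rect s t d h i) (rect s t d h j))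

/-- A packing is normalized if every job either touches the capacity from below, or
its top touches the bottom of another job whose path intersects its own path. -/
def Normalized (s t : ι → ℕ) (d : ι → ℝ) (cstar : ℝ) (h : ι → ℝ) : Prop :=
  ∀ i, h i + d i = cstar ∨ ∃ j, h i + d i = h j ∧ pathsIntersect s t i j

end PathUFP

/-!
Follow the normalization condition upwards: a job that does not touch the capacity sits directly
below a job with intersecting path whose bottom is strictly higher, since demands are positive.
Heights strictly increase along this walk, so it visits distinct jobs, and finiteness forces it to
stop at a job touching the capacity. Summing the demands along the walk telescopes to `c* - h_j`.
-/

section Chains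

variable {α β M : Type*}

theorem List.IsChain.nodup_of_imp_lt [Preorder β] {f : α → β} {r : α → α → Prop}
    (hr : ∀ a b, r a b → f a < f b) {L : List α} (hL : L.IsChain r) : L.Nodup :=
  List.Nodup.of_map f ((List.isChain_map f).2 (hL.imp hr)).pairwise.nodup

theorem exists_isChain_from_of_forall_or_exists [Finite α] [Preorder β] (f : α → β)
    (r : α → α → Prop) (p : α → Prop) (hr : ∀ a b, r a b → f a < f b)
    (step : ∀ a, p a ∨ ∃ b, r a b) (a : α) :
    ∃ L : List α, L.head? = some a ∧ L.IsChain r ∧ ∀ z ∈ L.getLast?, p z := by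
  have : IsTrans α (fun x y => f y < f x) := ⟨fun _ _ _ hxy hyz => hyz.trans hxy⟩
  have : Std.Irrefl (fun x y : α => f y < f x) := ⟨fun x => lt_irrefl (f x)⟩
  induction a using (Finite.wellFounded_of_trans_of_irrefl (fun x y : α => f y < f x)).induction
    with | _ a ih => ?_
  rcases step a with hpa | ⟨b, hab⟩
  · exact ⟨[a], rfl, List.isChain_singleton a, by simpa using hpa⟩
  · obtain ⟨L, hhead, hchain, hlast⟩ := ih b (hr a b hab)
    obtain ⟨L, rfl⟩ := List.head?_eq_some_iff.1 hhead
    exact ⟨a :: b :: L, rfl, List.isChain_cons_cons.2 ⟨hab, hchain⟩,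
      by rwa [List.getLast?_cons_cons]⟩

theorem List.IsChain.head_add_sum_eq [AddMonoid M] {h d : α → M} {c : M} :
    ∀ {L : List α} {a : α}, L.head? = some a → L.IsChain (fun x y => h x + d x = h y) →
      (∀ z ∈ L.getLast?, h z + d z = c) → h a + (L.map d).sum = c
  | [], _, hhead, _, _ => nomatch hhead
  | [a], _, rfl, _, hlast => by simpa using hlast a rfl
  | a :: b :: L, _, rfl, hchain, hlast => by
    obtain ⟨hab, hchain⟩ := List.isChain_cons_cons.1 hchain
    rw [List.map_cons, List.sum_cons, ← add_assoc, hab]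
    exact head_add_sum_eq rfl hchain (by rwa [List.getLast?_cons_cons] at hlast)

end Chains

open PathUFP in
theorem normalized_packing_heights_general {ι : Type*} [Fintype ι]
    (s t : ι → ℕ) (d : ι → ℝ)
    (hd : ∀ i, 0 < d i)
    (cstar : ℝ)
    (h : ι → ℝ)
    (hnorm : Normalized s t d cstar h) :
    ∀ j : ι, ∃ L : List ι,
      L.Nodup ∧
      L.head? = some j ∧
      L.Chain' (fun a b => pathsIntersect s t a b ∧ h a + d a = h b) ∧
      (∀ jlast : ι, L.getLast? = some jlast → h jlast + d jlast = cstar) ∧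
      h j = cstar - (L.map d).sum := by
  intro j
  have hrise : ∀ a b, pathsIntersect s t a b ∧ h a + d a = h b → h a < h b :=
    fun a b hab => by linarith [hab.2, hd a]
  obtain ⟨L, hhead, hchain, hlast⟩ := exists_isChain_from_of_forall_or_exists h _
    (fun a => h a + d a = cstar) hrise
    (fun a => (hnorm a).imp_right fun ⟨b, hab, hint⟩ => ⟨b, hint, hab⟩) j
  have hsum := (hchain.imp fun _ _ => And.right).head_add_sum_eq hhead hlast
  exact ⟨L, hchain.nodup_of_imp_lt hrise, hhead, hchain, hlast, by linarith⟩

open PathUFP in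
/-- Let `h` be a normalized valid packing of a finite set `J'` of jobs
inside one round with uniform edge capacity `c*`. Then for every job `j ∈ J'` there are
`k ≥ 1` distinct jobs `j_1, …, j_k ∈ J'` (a chain, given here as a nodup list `L` with
head `j`) with `j_1 = j`, such that consecutive jobs have intersecting paths and
`h_{j_i} + d_{j_i} = h_{j_{i+1}}`, the last job satisfies `h_{j_k} + d_{j_k} = c*`, and
consequently `h_j = c* − (d_{j_1} + ⋯ + d_{j_k})`. -/
theorem normalized_packing_heights {ι : Type*} [Fintype ι] (m : ℕ)
    (s t : ι → ℕ) (d : ι → ℝ)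
    (hst : ∀ i, s i < t i) (htm : ∀ i, t i ≤ m) (hd : ∀ i, 0 < d i)
    (cstar : ℝ) (hcstar : 0 < cstar)
    (h : ι → ℝ) (hvalid : ValidPacking s t d cstar h)
    (hnorm : Normalized s t d cstar h) :
    ∀ j : ι, ∃ L : List ι,
      L.Nodup ∧
      L.head? = some j ∧
      L.Chain' (fun a b => pathsIntersect s t a b ∧ h a + d a = h b) ∧
      (∀ jlast : ι, L.getLast? = some jlast → h jlast + d jlast = cstar) ∧
      h j = cstar - (L.map d).sum :=
  normalized_packing_heights_general s t d hd cstar h hnorm
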